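/- arXiv:2105.03274 — 6 statements merged into one kernel-verified Lean document; each statement's English description precedes it below -/
import Mathlib

section
/- Let A be a locally finite category with pushouts and a proper factorisation system (E, M), and let E, F : A^op → FinSet be functors sending E-pushout squares to pullbacks. If E(k) ≅ F(k) (i.e., they have the same finite cardinality) for every object k, then for every object k the set of generic elements of E(k) and the set of generic elements of F(k) have the same cardinality. -/
open CategoryTheory

universe v u

variable {A : Type u} [Category.{v} A]

/-- A weak factorisation system `(E, M)`: every morphism factors as an `E`-morphism
followed by an `M`-morphism, and the two classes are determined by mutual lifting
properties. -/
structure IsWFS (E M : MorphismProperty A) : Prop where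
  factor : ∀ {X Y : A} (f : X ⟶ Y),
    ∃ (Z : A) (e : X ⟶ Z) (m : Z ⟶ Y), E e ∧ M m ∧ e ≫ m = f
  E_iff : ∀ {X Y : A} (e : X ⟶ Y),
    E e ↔ ∀ {P Q : A} (m : P ⟶ Q), M m → HasLiftingProperty e m
  M_iff : ∀ {P Q : A} (m : P ⟶ Q),
    M m ↔ ∀ {X Y : A} (e : X ⟶ Y), E e → HasLiftingProperty e m

/-- A proper factorisation system: a weak factorisation system in which every
`E`-morphism is an epimorphism and every `M`-morphism is a monomorphism. -/
structure IsProperFS (E M : MorphismProperty A) extends IsWFS E M : Prop where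
  epi : ∀ {X Y : A} (e : X ⟶ Y), E e → Epi e
  mono : ∀ {X Y : A} (m : X ⟶ Y), M m → Mono m

open Opposite

universe w

section AuxLemmas
variable {E M : MorphismProperty A} (h : IsWFS E M)

lemma E_comp (hW : IsWFS E M) {X Y Z : A} {e : X ⟶ Y} {e' : Y ⟶ Z}
    (he : E e) (he' : E e') : E (e ≫ e') := by
  rw [hW.E_iff] at he he' ⊢
  intro P Q m hm
  haveI := he m hm
  haveI := he' m hm
  infer_instance

lemma E_pushout (hW : IsWFS E M) {a b c d : A} {f : a ⟶ b} {g : a ⟶ c}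
    {i : b ⟶ d} {j : c ⟶ d} (hp : IsPushout f g i j) (hf : E f) : E j := by
  rw [hW.E_iff] at hf ⊢
  intro P Q m hm
  haveI := hf m hm
  constructor
  intro u v sq
  have sq2 : CommSq (g ≫ u) f m (i ≫ v) := by
    constructor
    rw [Category.assoc, sq.w, ← Category.assoc, ← hp.w, Category.assoc]
  refine ⟨⟨⟨hp.desc sq2.lift u sq2.fac_left, hp.inr_desc _ _ _, ?_⟩⟩⟩
  apply hp.hom_ext
  · rw [← Category.assoc, hp.inl_desc, sq2.fac_right]
  · rw [← Category.assoc, hp.inr_desc, sq.w]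
open Limits in
section
variable [Limits.HasPushouts A]

lemma inj_of_E (hEM : IsProperFS E M) (F : Aᵒᵖ ⥤ FintypeCat.{w})
    (hF : ∀ {a b c d : A} (f : a ⟶ b) (g : a ⟶ c) (i : b ⟶ d) (j : c ⟶ d),
      E f → E g → E i → E j → IsPushout f g i j →
      IsPullback (F.map j.op) (F.map i.op) (F.map g.op) (F.map f.op))
    {k l : A} {e : k ⟶ l} (he : E e) :
    Function.Injective (F.map e.op) := by
  intro x y hxy
  have hp := IsPushout.of_hasPushout e e
  have hinr : E (pushout.inr e e) := E_pushout hEM.toIsWFS hp he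
  have hinl : E (pushout.inl e e) := E_pushout hEM.toIsWFS hp.flip he
  have heq : pushout.inl e e = pushout.inr e e := by
    haveI := hEM.epi e he
    exact (cancel_epi e).1 hp.w
  have hP := hF e e (pushout.inl e e) (pushout.inr e e) he he hinl hinr hp
  let W : FintypeCat.{w} := FintypeCat.of PUnit
  let a : W ⟶ F.obj (op l) := FintypeCat.homMk fun _ => x
  let b : W ⟶ F.obj (op l) := FintypeCat.homMk fun _ => y
  have hw : a ≫ F.map e.op = b ≫ F.map e.op := FintypeCat.hom_ext _ _ fun _ => hxy
  have hx : F.map (pushout.inr e e).op (hP.lift a b hw PUnit.unit) = x :=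
    ConcreteCategory.congr_hom (hP.lift_fst a b hw) PUnit.unit
  have hy : F.map (pushout.inl e e).op (hP.lift a b hw PUnit.unit) = y :=
    ConcreteCategory.congr_hom (hP.lift_snd a b hw) PUnit.unit
  rw [← hx, ← hy]
  exact (ConcreteCategory.congr_hom (congrArg (fun q : l ⟶ pushout e e => F.map q.op) heq) _).symm

lemma range_inter (hEM : IsProperFS E M) (F : Aᵒᵖ ⥤ FintypeCat.{w})
    (hF : ∀ {a b c d : A} (f : a ⟶ b) (g : a ⟶ c) (i : b ⟶ d) (j : c ⟶ d),
      E f → E g → E i → E j → IsPushout f g i j →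
      IsPullback (F.map j.op) (F.map i.op) (F.map g.op) (F.map f.op))
    {k l1 l2 : A} {e1 : k ⟶ l1} {e2 : k ⟶ l2} (h1 : E e1) (h2 : E e2) :
    Set.range (F.map (e1 ≫ pushout.inl e1 e2).op) =
      Set.range (F.map e1.op) ∩ Set.range (F.map e2.op) := by
  have hp := IsPushout.of_hasPushout e1 e2
  have hinr : E (pushout.inr e1 e2) := E_pushout hEM.toIsWFS hp h1
  have hinl : E (pushout.inl e1 e2) := E_pushout hEM.toIsWFS hp.flip h2
  have hP := hF e1 e2 (pushout.inl e1 e2) (pushout.inr e1 e2) h1 h2 hinl hinr hp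
  ext s
  constructor
  · rintro ⟨x, rfl⟩
    constructor
    · exact ⟨F.map (pushout.inl e1 e2).op x, by
        rw [op_comp, F.map_comp]; rfl⟩
    · refine ⟨F.map (pushout.inr e1 e2).op x, ?_⟩
      have : e1 ≫ pushout.inl e1 e2 = e2 ≫ pushout.inr e1 e2 := pushout.condition
      rw [this, op_comp, F.map_comp]; rfl
  · rintro ⟨⟨t1, ht1⟩, ⟨t2, ht2⟩⟩
    let W : FintypeCat.{w} := FintypeCat.of PUnit
    let a : W ⟶ F.obj (op l2) := FintypeCat.homMk fun _ => t2
    let b : W ⟶ F.obj (op l1) := FintypeCat.homMk fun _ => t1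
    have hw : a ≫ F.map e2.op = b ≫ F.map e1.op := FintypeCat.hom_ext _ _ fun _ => by
      simp only [FintypeCat.comp_apply, FintypeCat.homMk_apply]; exact ht2.trans ht1.symm
    have hl2 : F.map (pushout.inl e1 e2).op (hP.lift a b hw PUnit.unit) = t1 :=
      ConcreteCategory.congr_hom (hP.lift_snd a b hw) PUnit.unit
    refine ⟨hP.lift a b hw PUnit.unit, ?_⟩
    rw [op_comp, F.map_comp, FintypeCat.comp_apply, hl2]
    exact ht1
end

open Limits in
lemma inter_biInter_key {W : Type*} {ι : Type*} [DecidableEq ι] (S : ι → Set W) (j : ι)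
    (t : Finset ι) (hne : t.Nonempty) :
    (⋂ i ∈ t, (S j ∩ S i)) = ⋂ i ∈ insert j t, S i := by
  obtain ⟨i0, hi0⟩ := hne
  ext x
  simp only [Set.mem_iInter, Set.mem_inter_iff, Finset.mem_insert]
  constructor
  · rintro hx i (rfl | hi)
    exacts [(hx i0 hi0).1, (hx i hi).2]
  · intro hx i hi
    exact ⟨hx j (Or.inl rfl), hx i (Or.inr hi)⟩

lemma IE_aux {X Y : Type*} [Finite X] [Finite Y] {ι : Type*} (u : Finset ι)
    (S : ι → Set X) (T : ι → Set Y)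
    (h : ∀ t ⊆ u, t.Nonempty →
      Nat.card (⋂ i ∈ t, S i : Set X) = Nat.card (⋂ i ∈ t, T i : Set Y)) :
    Nat.card (⋃ i ∈ u, S i : Set X) = Nat.card (⋃ i ∈ u, T i : Set Y) := by
  classical
  induction u using Finset.induction_on generalizing S T with
  | empty => simp
  | @insert j v hjv ih =>
    have h1 : Nat.card (S j : Set X) = Nat.card (T j : Set Y) := by
      have := h {j} (by simp) ⟨j, by simp⟩
      simpa using this
    have h2 := ih S T (fun t ht hne => h t (ht.trans (Finset.subset_insert _ _)) hne)
    have h3 : Nat.card (⋃ i ∈ v, (S j ∩ S i) : Set X)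
        = Nat.card (⋃ i ∈ v, (T j ∩ T i) : Set Y) := by
      refine ih _ _ (fun t ht hne => ?_)
      rw [inter_biInter_key S j t hne, inter_biInter_key T j t hne]
      exact h (insert j t) (Finset.insert_subset_insert j ht) ⟨j, by simp⟩
    have hSd : S j ∩ (⋃ i ∈ v, S i) = ⋃ i ∈ v, (S j ∩ S i) := by
      simp [Set.inter_iUnion]
    have hTd : T j ∩ (⋃ i ∈ v, T i) = ⋃ i ∈ v, (T j ∩ T i) := by
      simp [Set.inter_iUnion]
    rw [Finset.set_biUnion_insert, Finset.set_biUnion_insert]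
    simp only [Nat.card_coe_set_eq] at h1 h2 h3 ⊢
    have eS := Set.ncard_union_add_ncard_inter (S j) (⋃ i ∈ v, S i)
      (Set.toFinite _) (Set.toFinite _)
    have eT := Set.ncard_union_add_ncard_inter (T j) (⋃ i ∈ v, T i)
      (Set.toFinite _) (Set.toFinite _)
    rw [hSd] at eS
    rw [hTd] at eT
    omega

end AuxLemmas

/-- An element `s ∈ F(k)` is degenerate if `s = F(f)(t)` for some strict quotient
`f : k ⟶ l` (an `E`-morphism which is not an isomorphism) and some `t ∈ F(l)`;
otherwise it is generic. -/
def Generic {E : MorphismProperty A} (F : Aᵒᵖ ⥤ FintypeCat) (k : A)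
    (s : F.obj (op k)) : Prop :=
  ¬ ∃ (l : A) (q : k ⟶ l), E q ∧ ¬ IsIso q ∧ ∃ t : F.obj (op l), F.map q.op t = s

/-- In a locally finite category with pushouts and a proper factorisation system,
if two functors `Aᵒᵖ ⥤ FinSet` sending `E`-pushout squares to pullbacks are
pointwise equinumerous, then their sets of generic elements are pointwise
equinumerous. -/
theorem stmt9 [∀ X Y : A, Finite (X ⟶ Y)] [Limits.HasPushouts A]
    {E M : MorphismProperty A} (hEM : IsProperFS E M)
    (F G : Aᵒᵖ ⥤ FintypeCat)
    (hF : ∀ {a b c d : A} (f : a ⟶ b) (g : a ⟶ c) (i : b ⟶ d) (j : c ⟶ d),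
      E f → E g → E i → E j → IsPushout f g i j →
      IsPullback (F.map j.op) (F.map i.op) (F.map g.op) (F.map f.op))
    (hG : ∀ {a b c d : A} (f : a ⟶ b) (g : a ⟶ c) (i : b ⟶ d) (j : c ⟶ d),
      E f → E g → E i → E j → IsPushout f g i j →
      IsPullback (G.map j.op) (G.map i.op) (G.map g.op) (G.map f.op))
    (hcard : ∀ k : A, Nat.card (F.obj (op k)) = Nat.card (G.obj (op k))) :
    ∀ k : A, Nat.card {s : F.obj (op k) // Generic (E := E) F k s}
           = Nat.card {s : G.obj (op k) // Generic (E := E) G k s} := by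
  intro k
  classical
  set ι := {p : Set (F.obj (op k)) × Set (G.obj (op k)) //
      ∃ (l : A) (q : k ⟶ l), E q ∧ ¬ IsIso q ∧
        p.1 = Set.range (F.map q.op) ∧ p.2 = Set.range (G.map q.op)} with hιdef
  haveI : Finite ι := Subtype.finite
  haveI : Fintype ι := Fintype.ofFinite ι
  set S : ι → Set (F.obj (op k)) := fun i => i.val.1 with hSdef
  set T : ι → Set (G.obj (op k)) := fun i => i.val.2 with hTdef
  have hFU : {s : F.obj (op k) | ¬ Generic (E := E) F k s} = ⋃ i : ι, S i := by
    ext s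
    simp only [Set.mem_setOf_eq, Generic, not_not, Set.mem_iUnion]
    constructor
    · rintro ⟨l, q, hq, hni, t, ht⟩
      exact ⟨⟨(Set.range (F.map q.op), Set.range (G.map q.op)),
        l, q, hq, hni, rfl, rfl⟩, t, ht⟩
    · rintro ⟨⟨p, l, q, hq, hni, hp1, hp2⟩, hs⟩
      have : s ∈ Set.range (F.map q.op) := by
        rw [← hp1]; exact hs
      obtain ⟨t, ht⟩ := this
      exact ⟨l, q, hq, hni, t, ht⟩
  have hGU : {s : G.obj (op k) | ¬ Generic (E := E) G k s} = ⋃ i : ι, T i := by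
    ext s
    simp only [Set.mem_setOf_eq, Generic, not_not, Set.mem_iUnion]
    constructor
    · rintro ⟨l, q, hq, hni, t, ht⟩
      exact ⟨⟨(Set.range (F.map q.op), Set.range (G.map q.op)),
        l, q, hq, hni, rfl, rfl⟩, t, ht⟩
    · rintro ⟨⟨p, l, q, hq, hni, hp1, hp2⟩, hs⟩
      have : s ∈ Set.range (G.map q.op) := by
        rw [← hp2]; exact hs
      obtain ⟨t, ht⟩ := this
      exact ⟨l, q, hq, hni, t, ht⟩
  have hcap : ∀ t : Finset ι, t.Nonempty →
      ∃ (l : A) (e : k ⟶ l), E e ∧ (⋂ i ∈ t, S i) = Set.range (F.map e.op)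
        ∧ (⋂ i ∈ t, T i) = Set.range (G.map e.op) := by
    intro t ht
    induction ht using Finset.Nonempty.cons_induction with
    | singleton j =>
      obtain ⟨l, q, hq, hni, hp1, hp2⟩ := j.2
      exact ⟨l, q, hq, by simpa using hp1, by simpa using hp2⟩
    | cons j t hjt hne ih =>
      obtain ⟨l, e, he, hSF, hSG⟩ := ih
      obtain ⟨lj, qj, hqj, hni, hp1, hp2⟩ := j.2
      have hpinl : E (Limits.pushout.inl qj e) :=
        E_pushout hEM.toIsWFS (IsPushout.of_hasPushout qj e).flip he
      refine ⟨Limits.pushout qj e, qj ≫ Limits.pushout.inl qj e,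
        E_comp hEM.toIsWFS hqj hpinl, ?_, ?_⟩
      · rw [Finset.cons_eq_insert, Finset.set_biInter_insert,
          range_inter hEM F hF hqj he, hSF]
        congr 1
      · rw [Finset.cons_eq_insert, Finset.set_biInter_insert,
          range_inter hEM G hG hqj he, hSG]
        congr 1
  have hcapcard : ∀ t : Finset ι, t.Nonempty →
      Nat.card (⋂ i ∈ t, S i : Set (F.obj (op k)))
        = Nat.card (⋂ i ∈ t, T i : Set (G.obj (op k))) := by
    intro t ht
    obtain ⟨l, e, he, h1, h2⟩ := hcap t ht
    rw [h1, h2, Nat.card_range_of_injective (inj_of_E hEM F hF he),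
      Nat.card_range_of_injective (inj_of_E hEM G hG he)]
    exact hcard l
  have hUcard := IE_aux Finset.univ S T (fun t _ hne => hcapcard t hne)
  have hUS : ⋃ i ∈ (Finset.univ : Finset ι), S i = ⋃ i : ι, S i := by simp
  have hUT : ⋃ i ∈ (Finset.univ : Finset ι), T i = ⋃ i : ι, T i := by simp
  rw [hUS, hUT] at hUcard
  have e1 : Nat.card {s : F.obj (op k) // Generic (E := E) F k s}
      = Nat.card ((⋃ i : ι, S i)ᶜ : Set (F.obj (op k))) := by
    refine Nat.card_congr (Equiv.subtypeEquivRight fun s => ?_)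
    have h := Set.ext_iff.mp hFU s
    simp only [Set.mem_setOf_eq] at h
    rw [Set.mem_compl_iff, ← h, not_not]
  have e2 : Nat.card {s : G.obj (op k) // Generic (E := E) G k s}
      = Nat.card ((⋃ i : ι, T i)ᶜ : Set (G.obj (op k))) := by
    refine Nat.card_congr (Equiv.subtypeEquivRight fun s => ?_)
    have h := Set.ext_iff.mp hGU s
    simp only [Set.mem_setOf_eq] at h
    rw [Set.mem_compl_iff, ← h, not_not]
  have cS := Set.ncard_add_ncard_compl (⋃ i : ι, S i) (Set.toFinite _) (Set.toFinite _)
  have cT := Set.ncard_add_ncard_compl (⋃ i : ι, T i) (Set.toFinite _) (Set.toFinite _)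
  have hk := hcard k
  rw [e1, e2]
  simp only [Nat.card_coe_set_eq] at hUcard ⊢
  omega
end

section
/- Let A be a locally finite category with pushouts and a proper factorisation system. If two objects m and n of A satisfy |hom_A(k, m)| = |hom_A(k, n)| for every object k of A, then m and n are isomorphic. -/
open CategoryTheory

universe v u

variable {A : Type u} [Category.{v} A]

/-- If `f ∈ M` factors as `e ≫ g` with `e ∈ E`, then `e` is iso. -/
lemma aux_isIso_of_E_fac {E M : MorphismProperty A} (h : IsProperFS E M)
    {k q x : A} {e : k ⟶ q} {g : q ⟶ x} {f : k ⟶ x}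
    (he : E e) (hf : M f) (hfac : e ≫ g = f) : IsIso e := by
  have hl : HasLiftingProperty e f := (h.M_iff f).mp hf e he
  have sq : CommSq (𝟙 k) e f g := ⟨by simpa using hfac.symm⟩
  obtain ⟨⟨⟨l, hl1, hl2⟩⟩⟩ := hl.sq_hasLift sq
  haveI : Epi e := h.epi e he
  refine ⟨l, hl1, ?_⟩
  rw [← cancel_epi e]
  simp [reassoc_of% hl1]

/-- E-parts of factorisations of non-M maps are not iso. -/
lemma aux_M_of_iso_comp {E M : MorphismProperty A} (h : IsProperFS E M)
    {k q x : A} {e : k ⟶ q} (g : q ⟶ x) (he : IsIso e) (hg : M g) : M (e ≫ g) := by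
  rw [h.M_iff]
  intro X Y e' he'
  haveI : HasLiftingProperty e' g := (h.M_iff g).mp hg e' he'
  haveI : IsIso e := he
  infer_instance

/-- E is closed under composition. -/
lemma aux_E_comp {E M : MorphismProperty A} (h : IsProperFS E M)
    {x y z : A} {e : x ⟶ y} {e' : y ⟶ z} (he : E e) (he' : E e') : E (e ≫ e') := by
  rw [h.E_iff]
  intro P Q mm hm
  haveI := (h.E_iff e).mp he mm hm
  haveI := (h.E_iff e').mp he' mm hm
  infer_instance

/-- E is stable under cobase change: `pushout.inl a b` is in E when `b` is. -/
lemma aux_E_pushout_inl [Limits.HasPushouts A] {E M : MorphismProperty A} (h : IsProperFS E M)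
    {k y z : A} (a : k ⟶ y) (b : k ⟶ z) (hb : E b) : E (Limits.pushout.inl a b) := by
  rw [h.E_iff]
  intro P Q mm hm
  haveI hlb : HasLiftingProperty b mm := (h.E_iff b).mp hb mm hm
  constructor
  intro u v sq
  have sq2 : CommSq (a ≫ u) b mm (Limits.pushout.inr a b ≫ v) := by
    constructor
    rw [Category.assoc, sq.w, ← Category.assoc, Limits.pushout.condition, Category.assoc]
  obtain ⟨⟨⟨l, hl1, hl2⟩⟩⟩ := hlb.sq_hasLift sq2
  refine CommSq.HasLift.mk' ⟨Limits.pushout.desc u l hl1.symm, Limits.pushout.inl_desc _ _ _, ?_⟩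
  apply Limits.pushout.hom_ext
  · rw [Limits.pushout.inl_desc_assoc, sq.w]
  · rw [Limits.pushout.inr_desc_assoc, hl2]

lemma aux_emb_card [∀ X Y : A, Finite (X ⟶ Y)] [Limits.HasPushouts A]
    {E M : MorphismProperty A} (h : IsProperFS E M) (m n : A)
    (hcount : ∀ k : A, Nat.card (k ⟶ m) = Nat.card (k ⟶ n)) (k : A) :
    Nat.card {f : k ⟶ m // M f} = Nat.card {f : k ⟶ n // M f} := by
  classical
  -- cardinality of the set of maps factoring through a fixed E-map
  have thru_card : ∀ (x q : A) (e : k ⟶ q), E e →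
      Set.ncard {f : k ⟶ x | ∃ g, e ≫ g = f} = Nat.card (q ⟶ x) := by
    intro x q e he
    haveI : Epi e := h.epi e he
    have hinj : Function.Injective (fun g : q ⟶ x => e ≫ g) := by
      intro g g' hh
      exact (cancel_epi e).mp hh
    have hset : {f : k ⟶ x | ∃ g, e ≫ g = f} = Set.range (fun g : q ⟶ x => e ≫ g) := rfl
    rw [hset, ← Nat.card_coe_set_eq]
    exact (Nat.card_congr (Equiv.ofInjective _ hinj)).symm
  -- key induction : unions of "factoring through" sets have equal cardinalities
  have key : ∀ (N : ℕ) (L : List (Σ q : A, {e : k ⟶ q // E e})), L.length ≤ N →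
      Set.ncard {f : k ⟶ m | ∃ p ∈ L, ∃ g, p.2.1 ≫ g = f}
        = Set.ncard {f : k ⟶ n | ∃ p ∈ L, ∃ g, p.2.1 ≫ g = f} := by
    intro N
    induction N with
    | zero =>
      intro L hL
      have : L = [] := List.eq_nil_of_length_eq_zero (Nat.le_zero.mp hL)
      subst this; simp
    | succ N ih =>
      intro L hL
      match L with
      | [] => simp
      | p₀ :: L' =>
        have hL' : L'.length ≤ N := by simpa using Nat.succ_le_succ_iff.mp (by simpa using hL)
        set e₀ := p₀.2.1 with he₀def
        let join : (Σ q : A, {e : k ⟶ q // E e}) → (Σ q : A, {e : k ⟶ q // E e}) :=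
          fun p => ⟨Limits.pushout e₀ p.2.1, e₀ ≫ Limits.pushout.inl e₀ p.2.1,
            aux_E_comp h p₀.2.2 (aux_E_pushout_inl h e₀ p.2.1 p.2.2)⟩
        have hsplit : ∀ x : A, {f : k ⟶ x | ∃ p ∈ p₀ :: L', ∃ g, p.2.1 ≫ g = f}
            = {f : k ⟶ x | ∃ g, e₀ ≫ g = f} ∪ {f : k ⟶ x | ∃ p ∈ L', ∃ g, p.2.1 ≫ g = f} := by
          intro x
          ext f
          constructor
          · rintro ⟨p, hp, g, hg⟩
            rcases List.mem_cons.mp hp with rfl | hp'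
            · exact Or.inl ⟨g, hg⟩
            · exact Or.inr ⟨p, hp', g, hg⟩
          · rintro (⟨g, hg⟩ | ⟨p, hp, g, hg⟩)
            · exact ⟨p₀, List.mem_cons_self, g, hg⟩
            · exact ⟨p, List.mem_cons_of_mem _ hp, g, hg⟩
        have hinter : ∀ x : A, {f : k ⟶ x | ∃ g, e₀ ≫ g = f}
              ∩ {f : k ⟶ x | ∃ p ∈ L', ∃ g, p.2.1 ≫ g = f}
            = {f : k ⟶ x | ∃ p ∈ L'.map join, ∃ g, p.2.1 ≫ g = f} := by
          intro x
          ext f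
          constructor
          · rintro ⟨⟨g₀, hg₀⟩, ⟨p, hp, g, hg⟩⟩
            refine ⟨join p, List.mem_map_of_mem (f := join) hp,
              Limits.pushout.desc g₀ g (hg₀.trans hg.symm), ?_⟩
            show (e₀ ≫ Limits.pushout.inl e₀ p.2.1) ≫ _ = f
            rw [Category.assoc, Limits.pushout.inl_desc]
            exact hg₀
          · rintro ⟨p', hp', g, hg⟩
            obtain ⟨p, hp, rfl⟩ := List.mem_map.mp hp'
            have hg' : (e₀ ≫ Limits.pushout.inl e₀ p.2.1) ≫ g = f := hg
            have hg'' : (p.2.1 ≫ Limits.pushout.inr e₀ p.2.1) ≫ g = f := by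
              rw [← Limits.pushout.condition]; exact hg'
            constructor
            · exact ⟨Limits.pushout.inl e₀ p.2.1 ≫ g, by simpa only [Category.assoc] using hg'⟩
            · exact ⟨p, hp, Limits.pushout.inr e₀ p.2.1 ≫ g,
                by simpa only [Category.assoc] using hg''⟩
        have hmapLen : (L'.map join).length ≤ N := by simpa using hL'
        have h1m := Set.ncard_union_add_ncard_inter
          {f : k ⟶ m | ∃ g, e₀ ≫ g = f} {f : k ⟶ m | ∃ p ∈ L', ∃ g, p.2.1 ≫ g = f}
          (Set.toFinite _) (Set.toFinite _)
        have h1n := Set.ncard_union_add_ncard_inter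
          {f : k ⟶ n | ∃ g, e₀ ≫ g = f} {f : k ⟶ n | ∃ p ∈ L', ∃ g, p.2.1 ≫ g = f}
          (Set.toFinite _) (Set.toFinite _)
        rw [hinter m] at h1m
        rw [hinter n] at h1n
        rw [hsplit m, hsplit n]
        have e1 := thru_card m _ e₀ p₀.2.2
        have e2 := thru_card n _ e₀ p₀.2.2
        have e3 := ih L' hL'
        have e4 := ih (L'.map join) hmapLen
        have e5 := hcount p₀.1
        omega
  -- construct the covering list
  haveI := Fintype.ofFinite (k ⟶ m)
  haveI := Fintype.ofFinite (k ⟶ n)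
  have wit : ∀ {x : A} (f : k ⟶ x), ∃ p : (Σ q : A, {e : k ⟶ q // E e}),
      ¬ M f → (¬ IsIso p.2.1 ∧ ∃ g, p.2.1 ≫ g = f) := by
    intro x f
    by_cases hf : M f
    · refine ⟨⟨k, 𝟙 k, ?_⟩, fun h' => absurd hf h'⟩
      rw [h.E_iff]
      intro P Q mm hm
      infer_instance
    · obtain ⟨z, e, μ, he, hμ, hfac⟩ := h.factor f
      refine ⟨⟨z, e, he⟩, fun _ => ⟨?_, μ, hfac⟩⟩
      intro hiso
      exact hf (hfac ▸ aux_M_of_iso_comp h μ hiso hμ)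
  let pm : (k ⟶ m) → (Σ q : A, {e : k ⟶ q // E e}) := fun f => (wit f).choose
  let pn : (k ⟶ n) → (Σ q : A, {e : k ⟶ q // E e}) := fun f => (wit f).choose
  let Lm : List (Σ q : A, {e : k ⟶ q // E e}) :=
    (Finset.univ : Finset (k ⟶ m)).toList.filterMap
      (fun f => if M f then none else some (pm f))
  let Ln : List (Σ q : A, {e : k ⟶ q // E e}) :=
    (Finset.univ : Finset (k ⟶ n)).toList.filterMap
      (fun f => if M f then none else some (pn f))
  let L₀ := Lm ++ Ln
  have hnoniso : ∀ p ∈ L₀, ¬ IsIso p.2.1 := by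
    intro p hp
    rcases List.mem_append.mp hp with hp' | hp'
    · obtain ⟨f, _, hf⟩ := List.mem_filterMap.mp hp'
      by_cases hMf : M f
      · simp [hMf] at hf
      · simp only [hMf, if_false, Option.some_inj] at hf
        subst hf
        exact (((wit f).choose_spec) hMf).1
    · obtain ⟨f, _, hf⟩ := List.mem_filterMap.mp hp'
      by_cases hMf : M f
      · simp [hMf] at hf
      · simp only [hMf, if_false, Option.some_inj] at hf
        subst hf
        exact (((wit f).choose_spec) hMf).1
  have hcovm : {f : k ⟶ m | M f}ᶜ = {f : k ⟶ m | ∃ p ∈ L₀, ∃ g, p.2.1 ≫ g = f} := by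
    ext f
    simp only [Set.mem_compl_iff, Set.mem_setOf_eq]
    constructor
    · intro hf
      refine ⟨pm f, List.mem_append.mpr (Or.inl ?_), ((wit f).choose_spec hf).2⟩
      exact List.mem_filterMap.mpr ⟨f, by simp, by simp [hf, pm]⟩
    · rintro ⟨p, hp, g, hg⟩
      intro hMf
      exact hnoniso p hp (aux_isIso_of_E_fac h p.2.2 hMf hg)
  have hcovn : {f : k ⟶ n | M f}ᶜ = {f : k ⟶ n | ∃ p ∈ L₀, ∃ g, p.2.1 ≫ g = f} := by
    ext f
    simp only [Set.mem_compl_iff, Set.mem_setOf_eq]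
    constructor
    · intro hf
      refine ⟨pn f, List.mem_append.mpr (Or.inr ?_), ((wit f).choose_spec hf).2⟩
      exact List.mem_filterMap.mpr ⟨f, by simp, by simp [hf, pn]⟩
    · rintro ⟨p, hp, g, hg⟩
      intro hMf
      exact hnoniso p hp (aux_isIso_of_E_fac h p.2.2 hMf hg)
  have hu := key L₀.length L₀ le_rfl
  have hm1 := Set.ncard_add_ncard_compl {f : k ⟶ m | M f} (Set.toFinite _) (Set.toFinite _)
  have hn1 := Set.ncard_add_ncard_compl {f : k ⟶ n | M f} (Set.toFinite _) (Set.toFinite _)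
  rw [hcovm] at hm1
  rw [hcovn] at hn1
  have hsm : Nat.card {f : k ⟶ m // M f} = Set.ncard {f : k ⟶ m | M f} := by
    rw [← Nat.card_coe_set_eq]
    exact Nat.card_congr (Equiv.subtypeEquivRight (by simp))
  have hsn : Nat.card {f : k ⟶ n // M f} = Set.ncard {f : k ⟶ n | M f} := by
    rw [← Nat.card_coe_set_eq]
    exact Nat.card_congr (Equiv.subtypeEquivRight (by simp))
  have htot := hcount k
  omega

lemma aux_mono_endo_isIso [∀ X Y : A, Finite (X ⟶ Y)] {a : A} (f : a ⟶ a) [Mono f] :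
    IsIso f := by
  have hinj : Function.Injective (fun g : a ⟶ a => g ≫ f) := fun g g' hh =>
    (cancel_mono f).mp hh
  obtain ⟨g, hg⟩ := Finite.injective_iff_surjective.mp hinj (𝟙 a)
  have hg' : g ≫ f = 𝟙 a := hg
  have hfg : f ≫ g = 𝟙 a := by
    rw [← cancel_mono f, Category.assoc, hg', Category.comp_id, Category.id_comp]
  exact ⟨g, hfg, hg'⟩

/-- Categorical Lovász-type theorem: in a locally finite category with pushouts
and a proper factorisation system, two objects with the same homomorphism counts
from every object are isomorphic. -/
theorem stmt10 [∀ X Y : A, Finite (X ⟶ Y)] [Limits.HasPushouts A]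
    {E M : MorphismProperty A} (h : IsProperFS E M) (m n : A)
    (hcount : ∀ k : A, Nat.card (k ⟶ m) = Nat.card (k ⟶ n)) :
    Nonempty (m ≅ n) := by
  have hM := aux_emb_card h m n hcount
  have hidm : M (𝟙 m) := by
    rw [h.M_iff]; intro X Y e he; infer_instance
  have hidn : M (𝟙 n) := by
    rw [h.M_iff]; intro X Y e he; infer_instance
  have h1 : Nonempty {f : m ⟶ n // M f} := by
    have : 0 < Nat.card {f : m ⟶ n // M f} := by
      rw [← hM m]
      haveI : Nonempty {f : m ⟶ m // M f} := ⟨⟨𝟙 m, hidm⟩⟩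
      exact Nat.card_pos
    exact (Nat.card_pos_iff.mp this).1
  have h2 : Nonempty {f : n ⟶ m // M f} := by
    have : 0 < Nat.card {f : n ⟶ m // M f} := by
      rw [hM n]
      haveI : Nonempty {f : n ⟶ n // M f} := ⟨⟨𝟙 n, hidn⟩⟩
      exact Nat.card_pos
    exact (Nat.card_pos_iff.mp this).1
  obtain ⟨u, hu⟩ := h1
  obtain ⟨v, hv⟩ := h2
  haveI : Mono u := h.mono u hu
  haveI : Mono v := h.mono v hv
  haveI : Mono (v ≫ u) := mono_comp v u
  haveI : IsIso (v ≫ u) := aux_mono_endo_isIso (v ≫ u)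
  have hw : (inv (v ≫ u) ≫ v) ≫ u = 𝟙 n := by
    rw [Category.assoc, IsIso.inv_comp_eq, Category.comp_id]
  have hw' : u ≫ (inv (v ≫ u) ≫ v) = 𝟙 m := by
    rw [← cancel_mono u, Category.assoc, hw, Category.comp_id, Category.id_comp]
  haveI : IsIso u := ⟨inv (v ≫ u) ≫ v, hw', hw⟩
  exact ⟨asIso u⟩
end

section
/- In a category A with a proper factorisation system, if there exist M-morphisms (monomorphisms in the factorisation system) i : m → n and j : n → m between objects with finite hom-sets, then m ≅ n. -/
open CategoryTheory

universe v u

variable {A : Type u} [Category.{v} A]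

/-- In a category with a proper factorisation system, if there are `M`-morphisms
`i : m ⟶ n` and `j : n ⟶ m` between objects with finite hom-sets, then `m ≅ n`. -/
theorem stmt11 {E M : MorphismProperty A} (h : IsProperFS E M) {m n : A}
    [Finite (m ⟶ m)] [Finite (n ⟶ n)] [Finite (m ⟶ n)] [Finite (n ⟶ m)]
    (i : m ⟶ n) (j : n ⟶ m) (hi : M i) (hj : M j) :
    Nonempty (m ≅ n) := by
  have hmi : Mono i := h.mono i hi
  have hmj : Mono j := h.mono j hj
  have hinj : Function.Injective (fun f : n ⟶ n => f ≫ j ≫ i) := by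
    intro f g hfg
    simp only [← Category.assoc] at hfg
    exact (cancel_mono j).mp ((cancel_mono i).mp hfg)
  obtain ⟨g, hg⟩ := (Finite.injective_iff_surjective.mp hinj) (𝟙 n)
  have hsplit : IsSplitEpi i := ⟨⟨⟨g ≫ j, by simpa using hg⟩⟩⟩
  have : IsIso i := isIso_of_mono_of_isSplitEpi i
  exact ⟨asIso i⟩
end

section
/- Let D be a finite σ⁺-structure of tree-depth at most n (its Gaifman graph admits a forest cover of height at most n). Then the quotient σ-structure H(D) = D⁻/∼, where ∼ is the equivalence relation generated by the interpretation of the binary relation I in D, also has tree-depth at most n. -/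
/-- A relational signature: a type of relation symbols with arities. -/
structure RelSig where
  symbols : Type
  arity : symbols → ℕ

/-- A relational structure for the signature `σ`. -/
structure RStruct (σ : RelSig) where
  carrier : Type
  rel : ∀ s : σ.symbols, (Fin (σ.arity s) → carrier) → Prop

/-- A homomorphism of `σ`-structures. -/
structure RHom {σ : RelSig} (A B : RStruct σ) where
  toFun : A.carrier → B.carrier
  map_rel : ∀ s t, A.rel s t → B.rel s (toFun ∘ t)

/-- Composition of homomorphisms. -/
def RHom.comp {σ : RelSig} {A B C : RStruct σ} (g : RHom B C) (f : RHom A B) :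
    RHom A C :=
  ⟨g.toFun ∘ f.toFun, fun s t h => g.map_rel s _ (f.map_rel s t h)⟩

/-- The signature `σ⁺ = σ ∪ {I}`, with one fresh binary relation symbol `I`. -/
def RelSig.plus (σ : RelSig) : RelSig :=
  ⟨σ.symbols ⊕ Unit, Sum.elim σ.arity (fun _ => 2)⟩

/-- The embedding `J` of `σ`-structures into `σ⁺`-structures, interpreting the
extra binary symbol `I` as the identity relation. -/
def Jstr {σ : RelSig} (A : RStruct σ) : RStruct σ.plus where
  carrier := A.carrier
  rel := fun s => match s with
    | Sum.inl s => fun t => A.rel s t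
    | Sum.inr _ => fun t => t ⟨0, Nat.zero_lt_two⟩ = t ⟨1, Nat.one_lt_two⟩

/-- The functor `H` from `σ⁺`-structures to `σ`-structures: the quotient of the
`σ`-reduct by the equivalence relation generated by the interpretation of `I`,
with relations the images of those of the reduct. -/
def Hstr {σ : RelSig} (D : RStruct σ.plus) : RStruct σ where
  carrier :=
    Quot (fun a b : D.carrier => D.rel (Sum.inr ()) (fun i => if i.val = 0 then a else b))
  rel := fun s t => ∃ t' : Fin (σ.arity s) → D.carrier,
    (∀ i, Quot.mk _ (t' i) = t i) ∧ D.rel (Sum.inl s) t'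

/-- The action of `J` on homomorphisms. -/
def Jhom {σ : RelSig} {A B : RStruct σ} (h : RHom A B) : RHom (Jstr A) (Jstr B) where
  toFun := h.toFun
  map_rel := fun s => match s with
    | Sum.inl s => fun t ht => h.map_rel s t ht
    | Sum.inr _ => fun _ ht => congrArg h.toFun ht

/-- The adjacency relation of the Gaifman graph of a structure. -/
def gaifman {σ : RelSig} (A : RStruct σ) (a a' : A.carrier) : Prop :=
  a ≠ a' ∧ ∃ s t, A.rel s t ∧ (∃ i, t i = a) ∧ (∃ j, t j = a')

/-- `A` has tree-depth at most `n`: the Gaifman graph of `A` admits a forest cover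
(a poset in which every principal downset is a finite chain, together with an
injection compatible with adjacency) of height at most `n`. -/
def TreeDepthLe {σ : RelSig} (A : RStruct σ) (n : ℕ) : Prop :=
  ∃ (F : Type) (le : F → F → Prop),
    (∀ x, le x x) ∧
    (∀ x y z, le x y → le y z → le x z) ∧
    (∀ x y, le x y → le y x → x = y) ∧
    (∀ x, {y | le y x}.Finite) ∧
    (∀ x y z, le y x → le z x → (le y z ∨ le z y)) ∧
    (∀ x, Nat.card {y | le y x} ≤ n) ∧
    ∃ f : A.carrier → F, Function.Injective f ∧
      ∀ a a', gaifman A a a' → (le (f a) (f a') ∨ le (f a') (f a))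

/-- If a finite `σ⁺`-structure `D` has tree-depth at most `n`, then so does the
quotient `σ`-structure `H(D) = D⁻/∼`, where `∼` is the equivalence relation
generated by the interpretation of `I`. -/
theorem stmt16 (σ : RelSig) (D : RStruct σ.plus) [Finite D.carrier] (n : ℕ)
    (h : TreeDepthLe D n) : TreeDepthLe (Hstr D) n := by
  classical
  obtain ⟨F, le, hrefl, htrans, hanti, hfin, hchain, hcard, f, hinj, hadj⟩ := h
  set r : D.carrier → D.carrier → Prop :=
    fun a b => D.rel (Sum.inr ()) (fun i => if i.val = 0 then a else b) with hr
  -- r-related elements have comparable images (or are equal)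
  have hcomp : ∀ a b, r a b → a = b ∨ (le (f a) (f b) ∨ le (f b) (f a)) := by
    intro a b hab
    by_cases hab' : a = b
    · exact Or.inl hab'
    · refine Or.inr (hadj a b ⟨hab', Sum.inr (), _, hab, ⟨⟨0, by simp [RelSig.plus]⟩, by simp⟩,
        ⟨⟨1, by simp [RelSig.plus]⟩, by simp⟩⟩)
  -- depth lemma
  have hdep : ∀ x y, le x y → Nat.card {z | le z y} ≤ Nat.card {z | le z x} → x = y := by
    intro x y hxy hc
    have hsub : {z | le z x} ⊆ {z | le z y} := fun z hz => htrans z x y hz hxy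
    have heq : {z | le z x} = {z | le z y} := by
      apply Set.eq_of_subset_of_ncard_le hsub _ (hfin y)
      rwa [← Nat.card_coe_set_eq, ← Nat.card_coe_set_eq]
    have : y ∈ {z | le z x} := heq ▸ (hrefl y : y ∈ {z | le z y})
    exact hanti x y hxy this
  -- existence of a least element of the image of each class
  have exLeast : ∀ q : Quot r, ∃ m : F,
      (∃ d, Quot.mk r d = q ∧ f d = m) ∧ ∀ d', Quot.mk r d' = q → le m (f d') := by
    intro q
    obtain ⟨d, rfl⟩ := Quot.exists_rep q
    have hCfin : ({x | Relation.EqvGen r d x}).Finite := Set.toFinite _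
    obtain ⟨m, hm, hmin⟩ := Set.exists_min_image {x | Relation.EqvGen r d x}
      (fun x => Nat.card {y | le y (f x)}) hCfin ⟨d, Relation.EqvGen.refl d⟩
    have hmd : Quot.mk r m = Quot.mk r d := (Quot.eq.mpr hm).symm
    -- key step lemma
    have step : ∀ a b, Relation.EqvGen r d b → (le (f a) (f b) ∨ le (f b) (f a)) →
        le (f m) (f a) → le (f m) (f b) := by
      intro a b hb hc hma
      rcases hc with hc | hc
      · exact htrans _ _ _ hma hc
      · rcases hchain (f a) (f m) (f b) hma hc with h1 | h1
        · exact h1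
        · have := hdep (f b) (f m) h1 (hmin b hb)
          rw [← this]; exact hrefl _
    have key : ∀ a b, Relation.EqvGen r a b →
        ((Relation.EqvGen r d a ∧ le (f m) (f a)) ↔
         (Relation.EqvGen r d b ∧ le (f m) (f b))) := by
      intro a b hab
      induction hab with
      | rel a b hr' =>
          have hab : Relation.EqvGen r a b := Relation.EqvGen.rel _ _ hr'
          rcases hcomp a b hr' with rfl | hc
          · exact Iff.rfl
          · constructor
            · rintro ⟨hda, hma⟩
              have hdb : Relation.EqvGen r d b := Relation.EqvGen.trans _ _ _ hda hab
              exact ⟨hdb, step a b hdb hc hma⟩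
            · rintro ⟨hdb, hmb⟩
              have hda : Relation.EqvGen r d a :=
                Relation.EqvGen.trans _ _ _ hdb (Relation.EqvGen.symm _ _ hab)
              exact ⟨hda, step b a hda hc.symm hmb⟩
      | refl a => exact Iff.rfl
      | symm a b _ ih => exact ih.symm
      | trans a b c _ _ ih1 ih2 => exact ih1.trans ih2
    refine ⟨f m, ⟨m, hmd, rfl⟩, ?_⟩
    intro d' hd'
    have hmd' : Relation.EqvGen r m d' := by
      have := Quot.eq.mp (hmd.trans hd'.symm)
      exact this
    exact ((key m d' hmd').mp ⟨hm, hrefl _⟩).2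
  -- define g on the quotient
  set g : Quot r → F := fun q => (exLeast q).choose with hg
  have gprop : ∀ q, (∃ d, Quot.mk r d = q ∧ f d = g q) ∧
      ∀ d', Quot.mk r d' = q → le (g q) (f d') := fun q => (exLeast q).choose_spec
  refine ⟨F, le, hrefl, htrans, hanti, hfin, hchain, hcard, g, ?_, ?_⟩
  · -- injective
    intro q q' hqq'
    obtain ⟨⟨a, ha, hfa⟩, _⟩ := gprop q
    obtain ⟨⟨b, hb, hfb⟩, _⟩ := gprop q'
    have : f a = f b := by rw [hfa, hfb, hqq']
    rw [← ha, ← hb, hinj this]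
  · -- adjacency
    rintro q q' ⟨hne, s, t, ⟨t', ht', hrel⟩, ⟨i, hi⟩, ⟨j, hj⟩⟩
    have hiq : Quot.mk r (t' i) = q := (ht' i).trans hi
    have hjq : Quot.mk r (t' j) = q' := (ht' j).trans hj
    have hne' : t' i ≠ t' j := by
      intro hh
      exact hne (by rw [← hiq, ← hjq, hh])
    have hcab : le (f (t' i)) (f (t' j)) ∨ le (f (t' j)) (f (t' i)) :=
      hadj _ _ ⟨hne', Sum.inl s, t', hrel, ⟨i, rfl⟩, ⟨j, rfl⟩⟩
    have h1 : le (g q) (f (t' i)) := (gprop q).2 _ hiq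
    have h2 : le (g q') (f (t' j)) := (gprop q').2 _ hjq
    rcases hcab with hc | hc
    · exact hchain (f (t' j)) (g q) (g q') (htrans _ _ _ h1 hc) h2
    · exact hchain (f (t' i)) (g q) (g q') h1 (htrans _ _ _ h2 hc)
end

section
/- Let (A, ≤, p) be a finite σ⁺-structure with a k-pebble forest cover of height at most n, and suppose (u, v) ∈ I^A with u < v. Then the one-step quotient A/_{u∼v} (with carrier A \ {v}, restricted order, relations obtained by replacing v with u, and the modified pebbling function p') is again a k-pebble forest cover of height at most n; in particular, for all w, w' ∈ A \ {v}: (1) v ⊑ w in A implies u ⊑ w in A/_{u∼v}, and (2) w ⊑ w' in A implies w ⊑ w' in A/_{u∼v}, where ⊑ denotes the 'sees' relation. -/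
/-- The "sees" relation `a ⊑ a'`: `a` and `a'` are comparable and no element
strictly between the smaller and the larger carries the pebble of the smaller. -/
def sees {α : Type} [PartialOrder α] {k : ℕ} (p : α → Fin k) (a a' : α) : Prop :=
  (a ≤ a' ∧ ∀ z, a < z → z ≤ a' → p z ≠ p a) ∨
  (a' ≤ a ∧ ∀ z, a' < z → z ≤ a → p z ≠ p a')

/-- The one-step quotient `A/_{u∼v}`: the carrier is `A \ {v}` and each relation
is obtained by replacing `v` with `u` in its tuples. -/
def oneStep {σ : RelSig} (D : RStruct σ.plus) (u v : D.carrier) : RStruct σ.plus where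
  carrier := {w : D.carrier // w ≠ v}
  rel := fun s t => ∃ t0, D.rel s t0 ∧
    ∀ i, ((t0 i = v ∧ (t i).1 = u) ∨ (t0 i ≠ v ∧ (t i).1 = t0 i))

/-- Let `(A, ≤, p)` be a finite `σ⁺`-structure with a `k`-pebble forest cover of
height at most `n`, and `(u, v) ∈ I^A` with `u < v`.  Then the one-step quotient
`A/_{u∼v}` (carrier `A \ {v}`, restricted order, relations with `v` replaced by
`u`, and the modified pebbling function `p'`) is again a `k`-pebble forest cover
of height at most `n`; moreover (1) `v ⊑ w` implies `u ⊑ w` in the quotient, and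
(2) `w ⊑ w'` implies `w ⊑ w'` in the quotient. -/
theorem stmt17 (σ : RelSig) (k n : ℕ) (D : RStruct σ.plus) [Finite D.carrier]
    [PartialOrder D.carrier]
    (p : D.carrier → Fin k)
    -- `(D, ≤, p)` is a `k`-pebble forest cover of height at most `n`:
    (hforest : ∀ x y z : D.carrier, y ≤ x → z ≤ x → (y ≤ z ∨ z ≤ y))
    (hheight : ∀ x : D.carrier, Nat.card {y | y ≤ x} ≤ n)
    (hcover : ∀ a a', gaifman D a a' → sees p a a')
    -- `(u, v) ∈ I^A` and `u < v`:
    (u v : D.carrier)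
    (hI : D.rel (Sum.inr ()) (fun i => if i.val = 0 then u else v))
    (huv : u < v)
    -- `wmin w` is the least `w'` with `v < w' ≤ w` and `p w' = p w`:
    (wmin : D.carrier → D.carrier)
    (hwmin : ∀ w, v < w →
      v < wmin w ∧ wmin w ≤ w ∧ p (wmin w) = p w ∧
      ∀ w', v < w' → w' ≤ w → p w' = p w → wmin w ≤ w')
    -- the modified pebbling function `p'` on the carrier `A \ {v}`:
    (p' : {w : D.carrier // w ≠ v} → Fin k)
    (hp'1 : ∀ w : {w : D.carrier // w ≠ v},
      v ≤ w.1 → p w.1 = p v → ¬ sees p u (wmin w.1) → p' w = p u)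
    (hp'2 : ∀ w : {w : D.carrier // w ≠ v},
      v ≤ w.1 → p w.1 = p u → sees p v (wmin w.1) → p' w = p v)
    (hp'3 : ∀ w : {w : D.carrier // w ≠ v},
      ¬ (v ≤ w.1 ∧ p w.1 = p v ∧ ¬ sees p u (wmin w.1)) →
      ¬ (v ≤ w.1 ∧ p w.1 = p u ∧ sees p v (wmin w.1)) → p' w = p w.1) :
    -- the quotient is a `k`-pebble forest cover of height at most `n`:
    ((∀ x y z : {w : D.carrier // w ≠ v}, y ≤ x → z ≤ x → (y ≤ z ∨ z ≤ y)) ∧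
     (∀ x : {w : D.carrier // w ≠ v}, Nat.card {y | y ≤ x} ≤ n) ∧
     (∀ a a' : {w : D.carrier // w ≠ v},
        gaifman (oneStep D u v) a a' → sees p' a a')) ∧
    -- (1):
    (∀ (w : D.carrier) (hw : w ≠ v), sees p v w →
      sees p' ⟨u, ne_of_lt huv⟩ ⟨w, hw⟩) ∧
    -- (2):
    (∀ w w' : {w : D.carrier // w ≠ v}, sees p w.1 w'.1 → sees p' w w') := by
  classical
  -- Basic consequences of the hypotheses
  have hguv : gaifman D u v := by
    exact ⟨ne_of_lt huv, Sum.inr (), _, hI, ⟨⟨0, Nat.zero_lt_two⟩, rfl⟩, ⟨⟨1, Nat.one_lt_two⟩, rfl⟩⟩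
  have Huv : ∀ z, u < z → z ≤ v → p z ≠ p u := by
    rcases hcover u v hguv with ⟨_, h⟩ | ⟨h, _⟩
    · exact h
    · exact absurd (h.trans_lt huv) (lt_irrefl v)
  have hpvu : p v ≠ p u := Huv v huv le_rfl
  -- reformulations of "sees" from `u` and from `v`
  have L1 : ∀ m, v < m → (sees p u m ↔ ∀ t, v < t → t ≤ m → p t ≠ p u) := by
    intro m hm
    constructor
    · rintro (⟨_, h⟩ | ⟨h, _⟩)
      · exact fun t ht1 ht2 => h t (huv.trans ht1) ht2
      · exact absurd (h.trans_lt (huv.trans hm)) (lt_irrefl m)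
    · intro h
      refine Or.inl ⟨(huv.trans hm).le, fun t ht1 ht2 => ?_⟩
      rcases hforest m t v ht2 hm.le with h' | h'
      · exact Huv t ht1 h'
      · rcases eq_or_lt_of_le h' with h'' | h''
        · intro e; rw [← h''] at e; exact hpvu e
        · exact h t h'' ht2
  have L2 : ∀ m, v < m → (sees p v m ↔ ∀ t, v < t → t ≤ m → p t ≠ p v) := by
    intro m hm
    constructor
    · rintro (⟨_, h⟩ | ⟨h, _⟩)
      · exact h
      · exact absurd (h.trans_lt hm) (lt_irrefl m)
    · exact fun h => Or.inl ⟨hm.le, h⟩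
  have notL1 : ∀ m, v < m → ¬ sees p u m → ∃ t, v < t ∧ t ≤ m ∧ p t = p u := by
    intro m hm hs
    by_contra h'
    push_neg at h'
    exact hs ((L1 m hm).mpr h')
  -- classification of p'
  have hdefault : ∀ z : {w : D.carrier // w ≠ v}, ¬ v < z.1 → p' z = p z.1 := by
    intro z hz
    refine hp'3 z ?_ ?_ <;>
      exact fun h => hz (lt_of_le_of_ne h.1 (Ne.symm z.2))
  have hclass : ∀ z : {w : D.carrier // w ≠ v}, v < z.1 →
      (p z.1 = p v ∧ ¬ sees p u (wmin z.1) ∧ p' z = p u) ∨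
      (p z.1 = p u ∧ sees p v (wmin z.1) ∧ p' z = p v) ∨
      ((¬(p z.1 = p v ∧ ¬ sees p u (wmin z.1))) ∧
       (¬(p z.1 = p u ∧ sees p v (wmin z.1))) ∧ p' z = p z.1) := by
    intro z hz
    by_cases hA : p z.1 = p v ∧ ¬ sees p u (wmin z.1)
    · exact Or.inl ⟨hA.1, hA.2, hp'1 z hz.le hA.1 hA.2⟩
    by_cases hB : p z.1 = p u ∧ sees p v (wmin z.1)
    · exact Or.inr (Or.inl ⟨hB.1, hB.2, hp'2 z hz.le hB.1 hB.2⟩)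
    exact Or.inr (Or.inr ⟨hA, hB,
      hp'3 z (fun h => hA ⟨h.2.1, h.2.2⟩) (fun h => hB ⟨h.2.1, h.2.2⟩)⟩)
  -- the core combinatorial lemma (both points above v)
  have core : ∀ (w z : D.carrier) (hw : w ≠ v) (hz : z ≠ v), v < w → w < z →
      (∀ t, w < t → t ≤ z → p t ≠ p w) → p' ⟨z, hz⟩ ≠ p' ⟨w, hw⟩ := by
    intro w z hw hz hvw hwz Hsee
    have hvz : v < z := hvw.trans hwz
    have hpzw : p z ≠ p w := Hsee z hwz le_rfl
    obtain ⟨hmw1, hmw2, hmw3, hmw4⟩ := hwmin w hvw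
    obtain ⟨hmz1, hmz2, hmz3, hmz4⟩ := hwmin z hvz
    rcases hclass ⟨w, hw⟩ hvw with ⟨e1, hsw, ew⟩ | ⟨e1, hsw, ew⟩ | ⟨nA, nB, ew⟩ <;>
      rcases hclass ⟨z, hz⟩ hvz with ⟨f1, hsz, ez⟩ | ⟨f1, hsz, ez⟩ | ⟨mA, mB, ez⟩ <;>
      rw [ew, ez]
    · exact absurd (f1.trans e1.symm) hpzw
    · exact hpvu
    · -- A(w), default(z): goal p z ≠ p u
      intro hpz
      obtain ⟨t, ht1, ht2, ht3⟩ := notL1 (wmin w) hmw1 hsw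
      have htz : wmin z ≤ t :=
        hmz4 t ht1 (le_trans (ht2.trans hmw2) hwz.le) (ht3.trans hpz.symm)
      refine mB ⟨hpz, (L2 (wmin z) hmz1).mpr ?_⟩
      intro s hs1 hs2 hps
      have hsw' : s ≤ w := le_trans (le_trans (hs2.trans htz) ht2) hmw2
      have h1 : wmin w ≤ s := hmw4 s hs1 hsw' (hps.trans e1.symm)
      have : s = wmin z := le_antisymm hs2 (le_trans htz (le_trans ht2 h1))
      rw [this, hmz3, hpz] at hps
      exact hpvu hps.symm
    · exact hpvu.symm
    · exact absurd (f1.trans e1.symm) hpzw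
    · -- B(w), default(z): goal p z ≠ p v
      intro hpz
      have hcomp : wmin w ≤ wmin z ∨ wmin z ≤ wmin w :=
        hforest z (wmin w) (wmin z) (le_trans hmw2 hwz.le) hmz2
      refine mA ⟨hpz, ?_⟩
      rcases hcomp with hc | hc
      · intro hsee
        exact ((L1 (wmin z) hmz1).mp hsee) (wmin w) hmw1 hc (hmw3.trans e1)
      · exact absurd ((L2 (wmin w) hmw1).mp hsw (wmin z) hmz1 hc (hmz3.trans hpz))
          (fun h => h)
    · -- default(w), A(z): goal p u ≠ p w
      intro h
      obtain ⟨t, ht1, ht2, ht3⟩ := notL1 (wmin z) hmz1 hsz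
      refine nB ⟨h.symm, (L2 (wmin w) hmw1).mpr ?_⟩
      intro s hs1 hs2 hps
      have hsz' : s ≤ z := le_trans (hs2.trans hmw2) hwz.le
      have h1 : wmin z ≤ s := hmz4 s hs1 hsz' (hps.trans f1.symm)
      have h2 : wmin w ≤ t :=
        hmw4 t ht1 (le_trans (ht2.trans h1) (hs2.trans hmw2)) (ht3.trans h)
      have : t = s := le_antisymm (ht2.trans h1) (hs2.trans h2)
      rw [this, hps] at ht3
      exact hpvu ht3
    · -- default(w), B(z): goal p v ≠ p w
      intro h
      have hcomp : wmin w ≤ wmin z ∨ wmin z ≤ wmin w :=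
        hforest z (wmin w) (wmin z) (le_trans hmw2 hwz.le) hmz2
      refine nA ⟨h.symm, ?_⟩
      rcases hcomp with hc | hc
      · exact absurd ((L2 (wmin z) hmz1).mp hsz (wmin w) hmw1 hc
          (hmw3.trans h.symm)) (fun h' => h')
      · intro hsee
        exact ((L1 (wmin w) hmw1).mp hsee) (wmin z) hmz1 hc (hmz3.trans f1)
    · exact hpzw
  -- claim (2), directed version
  have claim2' : ∀ (w w' : {w : D.carrier // w ≠ v}), w.1 ≤ w'.1 →
      (∀ t, w.1 < t → t ≤ w'.1 → p t ≠ p w.1) →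
      ∀ z : {w : D.carrier // w ≠ v}, w.1 < z.1 → z.1 ≤ w'.1 → p' z ≠ p' w := by
    intro w w' hle H z hz1 hz2
    have Hz : ∀ t, w.1 < t → t ≤ z.1 → p t ≠ p w.1 :=
      fun t h1 h2 => H t h1 (h2.trans hz2)
    by_cases hvw : v < w.1
    · exact core w.1 z.1 w.2 z.2 hvw hz1 Hz
    · have ew : p' w = p w.1 := hdefault w hvw
      by_cases hvz : v < z.1
      · -- here w.1 < v
        have hwv : w.1 < v := by
          rcases hforest z.1 v w.1 hvz.le hz1.le with h | h
          · exact absurd (lt_of_le_of_ne h (fun e => w.2 e.symm)) hvw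
          · exact lt_of_le_of_ne h w.2
        rcases hclass z hvz with ⟨f1, hsz, ez⟩ | ⟨f1, hsz, ez⟩ | ⟨mA, mB, ez⟩
        · -- A(z): p' z = p u, need p u ≠ p w.1
          rw [ez, ew]
          have htri : u < w.1 ∨ u = w.1 ∨ w.1 < u := by
            rcases hforest z.1 u w.1 (huv.trans hvz).le hz1.le with h0 | h0
            · rcases eq_or_lt_of_le h0 with h' | h'
              · exact Or.inr (Or.inl h')
              · exact Or.inl h'
            · rcases eq_or_lt_of_le h0 with h' | h'
              · exact Or.inr (Or.inl h'.symm)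
              · exact Or.inr (Or.inr h')
          rcases htri with h' | h' | h'
          · exact (Huv w.1 h' hwv.le).symm
          · -- u = w.1 : contradiction with ¬ sees p u (wmin z)
            exfalso
            obtain ⟨hmz1, hmz2, _, _⟩ := hwmin z.1 hvz
            refine hsz ((L1 (wmin z.1) hmz1).mpr ?_)
            intro t ht1 ht2 hpt
            have hwt : w.1 < t := by rw [← h']; exact huv.trans ht1
            exact Hz t hwt (ht2.trans hmz2) (hpt.trans (congrArg p h'))
          · exact Hz u h' (huv.trans hvz).le
        · -- B(z): p' z = p v, need p v ≠ p w.1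
          rw [ez, ew]
          exact Hz v hwv (hvz.le)
        · rw [ez, ew]; exact Hz z.1 hz1 le_rfl
      · rw [hdefault z hvz, ew]
        exact Hz z.1 hz1 le_rfl
  have claim2 : ∀ w w' : {w : D.carrier // w ≠ v}, sees p w.1 w'.1 → sees p' w w' := by
    intro w w' h
    rcases h with ⟨hle, H⟩ | ⟨hle, H⟩
    · exact Or.inl ⟨hle, fun z hz1 hz2 => claim2' w w' hle H z hz1 hz2⟩
    · exact Or.inr ⟨hle, fun z hz1 hz2 => claim2' w' w hle H z hz1 hz2⟩
  -- p' at u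
  have hvu : ¬ v < u := fun h => absurd (huv.trans h) (lt_irrefl u)
  have epu : p' ⟨u, ne_of_lt huv⟩ = p u := hdefault ⟨u, ne_of_lt huv⟩ hvu
  -- claim (1)
  have claim1 : ∀ (w : D.carrier) (hw : w ≠ v), sees p v w →
      sees p' ⟨u, ne_of_lt huv⟩ ⟨w, hw⟩ := by
    intro w hw hsee
    rcases hsee with ⟨hle, H⟩ | ⟨hle, H⟩
    · -- v < w
      have hvw : v < w := lt_of_le_of_ne hle (fun e => hw e.symm)
      refine Or.inl ⟨(huv.trans hvw).le, ?_⟩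
      intro z hz1 hz2
      rw [epu]
      have hz1' : u < z.1 := hz1
      have hz2' : z.1 ≤ w := hz2
      rcases hforest w z.1 v hz2' hle with h | h
      · have hzv : z.1 < v := lt_of_le_of_ne h z.2
        rw [hdefault z (fun h' => absurd (h'.trans hzv) (lt_irrefl v))]
        exact Huv z.1 hz1' hzv.le
      · have hvz : v < z.1 := lt_of_le_of_ne h (fun e => z.2 e.symm)
        rcases hclass z hvz with ⟨f1, hsz, ez⟩ | ⟨f1, hsz, ez⟩ | ⟨mA, mB, ez⟩
        · exact absurd f1 (H z.1 hvz hz2')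
        · rw [ez]; exact hpvu
        · rw [ez]
          intro hzu
          obtain ⟨hmz1, hmz2, _, _⟩ := hwmin z.1 hvz
          refine mB ⟨hzu, (L2 (wmin z.1) hmz1).mpr ?_⟩
          intro s hs1 hs2 _
          exact (H s hs1 (le_trans (hs2.trans hmz2) hz2')) (by assumption)
    · -- w < v
      have hwv : w < v := lt_of_le_of_ne hle hw
      have ew : p' ⟨w, hw⟩ = p w := hdefault ⟨w, hw⟩
        (fun h => absurd (h.trans hwv) (lt_irrefl v))
      rcases hforest v u w huv.le hle with h | h
      · refine Or.inl ⟨h, ?_⟩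
        intro z hz1 hz2
        rw [epu]
        have hz2' : z.1 ≤ w := hz2
        have hzv : z.1 < v := lt_of_le_of_lt hz2' hwv
        rw [hdefault z (fun h' => absurd (h'.trans hzv) (lt_irrefl v))]
        exact Huv z.1 hz1 hzv.le
      · refine Or.inr ⟨h, ?_⟩
        intro z hz1 hz2
        rw [ew]
        have hz2' : z.1 ≤ u := hz2
        have hzv : z.1 < v := lt_of_le_of_lt hz2' huv
        rw [hdefault z (fun h' => absurd (h'.trans hzv) (lt_irrefl v))]
        exact H z.1 hz1 (hz2'.trans huv.le)
  refine ⟨⟨?_, ?_, ?_⟩, claim1, claim2⟩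
  · -- forest
    intro x y z hyx hzx
    rcases hforest x.1 y.1 z.1 hyx hzx with h | h
    · exact Or.inl h
    · exact Or.inr h
  · -- height
    intro x
    have hinj : Nat.card {y : {w : D.carrier // w ≠ v} | y ≤ x} ≤
        Nat.card {y : D.carrier | y ≤ x.1} := by
      refine Nat.card_le_card_of_injective
        (fun y => ⟨y.1.1, y.2⟩) ?_
      intro a b hab
      have h2 := congrArg Subtype.val hab
      exact Subtype.ext (Subtype.ext h2)
    exact hinj.trans (hheight x.1)
  · -- cover
    intro a a' hg
    obtain ⟨hne, s, t, ⟨t0, hrel, hrep⟩, ⟨i, hi⟩, ⟨j, hj⟩⟩ := hg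
    have hne' : a.1 ≠ a'.1 := fun h => hne (Subtype.ext h)
    have hia : (t i).1 = a.1 := congrArg Subtype.val hi
    have hja : (t j).1 = a'.1 := congrArg Subtype.val hj
    rcases hrep i with ⟨hiv, hiu⟩ | ⟨hiv, hie⟩ <;>
      rcases hrep j with ⟨hjv, hju⟩ | ⟨hjv, hje⟩
    · exact absurd ((hia.symm.trans hiu).trans (hju.symm.trans hja)) hne'
    · -- a = u (from v), a' = t0 j
      have hau : a.1 = u := hia.symm.trans hiu
      have haj : a'.1 = t0 j := hja.symm.trans hje
      have hgv : gaifman D v (t0 j) :=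
        ⟨fun e => hjv e.symm, s, t0, hrel, ⟨i, hiv⟩, ⟨j, rfl⟩⟩
      have hsv : sees p v a'.1 := haj ▸ hcover v (t0 j) hgv
      have := claim1 a'.1 a'.2 hsv
      have ha : a = ⟨u, ne_of_lt huv⟩ := Subtype.ext hau
      rw [ha]
      convert this using 1
    · -- a = t0 i, a' = u
      have hau : a'.1 = u := hja.symm.trans hju
      have hai : a.1 = t0 i := hia.symm.trans hie
      have hgv : gaifman D v (t0 i) :=
        ⟨fun e => hiv e.symm, s, t0, hrel, ⟨j, hjv⟩, ⟨i, rfl⟩⟩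
      have hsv : sees p v a.1 := hai ▸ hcover v (t0 i) hgv
      have h1 := claim1 a.1 a.2 hsv
      have ha : a' = ⟨u, ne_of_lt huv⟩ := Subtype.ext hau
      have h2 : sees p' ⟨u, ne_of_lt huv⟩ a := by convert h1 using 1
      rw [ha]
      exact h2.symm
    · have hai : a.1 = t0 i := hia.symm.trans hie
      have haj : a'.1 = t0 j := hja.symm.trans hje
      have hgd : gaifman D a.1 a'.1 :=
        ⟨hne', s, t0, hrel, ⟨i, hai.symm⟩, ⟨j, haj.symm⟩⟩
      exact claim2 a a' (hcover a.1 a'.1 hgd)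
end

section
/- For every primitive positive first-order formula γ(x̄) and positive integer t, there is a formula γᵗ(x̄) of first-order logic with counting quantifiers, using the same variables and of the same quantifier rank as γ and containing no equality or negation, such that for every finite structure B and interpretation ι of x̄ in B: B ⊨ γᵗ[ι] iff the number of witnessing assignments to the existential quantifiers of γ satisfying all atoms is at least t. -/
open Classical

/-- Primitive positive formulas: atoms, conjunction and existential
quantification, with variables indexed by `ℕ`. -/
inductive PP (σ : RelSig) : Type
  | atom (s : σ.symbols) (v : Fin (σ.arity s) → ℕ)
  | and (φ ψ : PP σ)
  | ex (x : ℕ) (φ : PP σ)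

/-- The number `|B ⊨ γ[ι]|` of witnessing assignments to the existential
quantifiers of `γ` satisfying all atoms, under the interpretation `ι`. -/
noncomputable def ppCount {σ : RelSig} (B : RStruct σ) [Fintype B.carrier] :
    PP σ → (ℕ → B.carrier) → ℕ
  | .atom s v, ι => if B.rel s (fun i => ι (v i)) then 1 else 0
  | .and φ ψ, ι => ppCount B φ ι * ppCount B ψ ι
  | .ex x φ, ι => ∑ b : B.carrier, ppCount B φ (Function.update ι x b)

/-- Quantifier rank of a primitive positive formula. -/
def ppQr {σ : RelSig} : PP σ → ℕ
  | .atom _ _ => 0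
  | .and φ ψ => max (ppQr φ) (ppQr ψ)
  | .ex _ φ => ppQr φ + 1

/-- The variables occurring in a primitive positive formula. -/
def ppVars {σ : RelSig} : PP σ → Set ℕ
  | .atom _ v => {m | ∃ i, v i = m}
  | .and φ ψ => ppVars φ ∪ ppVars ψ
  | .ex x φ => insert x (ppVars φ)

/-- Formulas of first-order logic with counting quantifiers, without equality and
without negation: atoms, `false`, conjunction, disjunction, and counting
quantifiers `∃≥t x`. -/
inductive CF (σ : RelSig) : Type
  | atom (s : σ.symbols) (v : Fin (σ.arity s) → ℕ)
  | fls
  | and (φ ψ : CF σ)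
  | or (φ ψ : CF σ)
  | cnt (t : ℕ) (x : ℕ) (φ : CF σ)

/-- Satisfaction of counting formulas: `∃≥t x. φ` holds when at least `t`
elements satisfy `φ`. -/
def cfSat {σ : RelSig} (B : RStruct σ) [Fintype B.carrier] :
    CF σ → (ℕ → B.carrier) → Prop
  | .atom s v, ι => B.rel s (fun i => ι (v i))
  | .fls, _ => False
  | .and φ ψ, ι => cfSat B φ ι ∧ cfSat B ψ ι
  | .or φ ψ, ι => cfSat B φ ι ∨ cfSat B ψ ι
  | .cnt t x φ, ι => t ≤ Nat.card {b : B.carrier // cfSat B φ (Function.update ι x b)}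

/-- Quantifier rank of a counting formula. -/
def cfQr {σ : RelSig} : CF σ → ℕ
  | .atom _ _ => 0
  | .fls => 0
  | .and φ ψ => max (cfQr φ) (cfQr ψ)
  | .or φ ψ => max (cfQr φ) (cfQr ψ)
  | .cnt _ _ φ => cfQr φ + 1

/-- The variables occurring in a counting formula. -/
def cfVars {σ : RelSig} : CF σ → Set ℕ
  | .atom _ v => {m | ∃ i, v i = m}
  | .fls => ∅
  | .and φ ψ => cfVars φ ∪ cfVars ψ
  | .or φ ψ => cfVars φ ∪ cfVars ψ
  | .cnt _ x φ => insert x (cfVars φ)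

namespace StmtAux

variable {σ : RelSig}

def bigOr : List (CF σ) → CF σ
  | [] => .fls
  | φ :: l => .or φ (bigOr l)

def bigAnd : List (CF σ) → CF σ
  | [] => .fls
  | [φ] => φ
  | φ :: l => .and φ (bigAnd l)

lemma bigOr_sat (B : RStruct σ) [Fintype B.carrier] (ι : ℕ → B.carrier) :
    ∀ l : List (CF σ), cfSat B (bigOr l) ι ↔ ∃ φ ∈ l, cfSat B φ ι
  | [] => by simp [bigOr, cfSat]
  | φ :: l => by simp [bigOr, cfSat, bigOr_sat B ι l]

lemma bigOr_qr {q : ℕ} : ∀ l : List (CF σ), l ≠ [] → (∀ φ ∈ l, cfQr φ = q) →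
    cfQr (bigOr l) = q
  | [], h, _ => absurd rfl h
  | [φ], _, hq => by simp [bigOr, cfQr, hq φ (by simp)]
  | φ :: ψ :: l, _, hq => by
      have h2 := bigOr_qr (ψ :: l) (by simp)
        (fun χ hχ => hq χ (List.mem_cons_of_mem _ hχ))
      show max (cfQr φ) (cfQr (bigOr (ψ :: l))) = q
      rw [hq φ (by simp), h2, max_self]

lemma bigOr_vars {V : Set ℕ} : ∀ l : List (CF σ), (∀ φ ∈ l, cfVars φ ⊆ V) →
    cfVars (bigOr l) ⊆ V
  | [], _ => by simp [bigOr, cfVars]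
  | φ :: l, h => by
      have := bigOr_vars l (fun χ hχ => h χ (List.mem_cons_of_mem _ hχ))
      simpa [bigOr, cfVars] using Set.union_subset (h φ (by simp)) this

lemma bigAnd_sat (B : RStruct σ) [Fintype B.carrier] (ι : ℕ → B.carrier) :
    ∀ l : List (CF σ), l ≠ [] → (cfSat B (bigAnd l) ι ↔ ∀ φ ∈ l, cfSat B φ ι)
  | [], h => absurd rfl h
  | [φ], _ => by simp [bigAnd]
  | φ :: ψ :: l, _ => by
      have := bigAnd_sat B ι (ψ :: l) (by simp)
      simp only [bigAnd, cfSat, this]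
      simp

lemma bigAnd_qr {q : ℕ} : ∀ l : List (CF σ), l ≠ [] → (∀ φ ∈ l, cfQr φ = q) →
    cfQr (bigAnd l) = q
  | [], h, _ => absurd rfl h
  | [φ], _, hq => hq φ (by simp)
  | φ :: ψ :: l, _, hq => by
      have h2 := bigAnd_qr (ψ :: l) (by simp)
        (fun χ hχ => hq χ (List.mem_cons_of_mem _ hχ))
      simp [bigAnd, cfQr, hq φ (by simp), h2]

lemma bigAnd_vars {V : Set ℕ} : ∀ l : List (CF σ), (∀ φ ∈ l, cfVars φ ⊆ V) →
    cfVars (bigAnd l) ⊆ V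
  | [], _ => by simp [bigAnd, cfVars]
  | [φ], h => h φ (by simp)
  | φ :: ψ :: l, h => by
      have := bigAnd_vars (ψ :: l) (fun χ hχ => h χ (List.mem_cons_of_mem _ hχ))
      simpa [bigAnd, cfVars] using Set.union_subset (h φ (by simp)) this

lemma min_mul_min {a b t : ℕ} (ht : 1 ≤ t) (h : t ≤ a * b) :
    t ≤ min a t * min b t := by
  have ha : 1 ≤ a := Nat.one_le_iff_ne_zero.2 (by rintro rfl; simp at h; omega)
  have hb : 1 ≤ b := Nat.one_le_iff_ne_zero.2 (by rintro rfl; simp at h; omega)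
  rcases le_total a t with h1 | h1 <;> rcases le_total b t with h2 | h2 <;>
    simp [min_eq_left, min_eq_right, h1, h2] <;> nlinarith

lemma sum_min {β : Type*} (s : Finset β) (c : β → ℕ) {t : ℕ} (h : t ≤ ∑ b ∈ s, c b) :
    t ≤ ∑ b ∈ s, min (c b) t := by
  by_cases hb : ∃ b ∈ s, t ≤ c b
  · obtain ⟨b, hbs, htb⟩ := hb
    calc t = min (c b) t := (min_eq_right htb).symm
      _ ≤ ∑ b ∈ s, min (c b) t := Finset.single_le_sum (f := fun b => min (c b) t) (fun _ _ => Nat.zero_le _) hbs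
  · push_neg at hb
    have : ∑ b ∈ s, min (c b) t = ∑ b ∈ s, c b :=
      Finset.sum_congr rfl fun b hbs => min_eq_left (hb b hbs).le
    omega

lemma sum_ite_min (c t : ℕ) :
    ∑ s ∈ Finset.range t, (if s + 1 ≤ c then 1 else 0) = min c t := by
  induction t with
  | zero => simp
  | succ t ih => rw [Finset.sum_range_succ, ih]; split <;> omega

lemma sum_card_filter {β : Type*} [Fintype β] (c : β → ℕ) (t : ℕ) :
    ∑ s ∈ Finset.range t, (Finset.univ.filter fun b => s + 1 ≤ c b).card
      = ∑ b : β, min (c b) t := by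
  classical
  simp_rw [Finset.card_filter]
  rw [Finset.sum_comm]
  simp_rw [sum_ite_min]

lemma exists_tuple_iff {β : Type*} [Fintype β] (c : β → ℕ) {t : ℕ} (ht : 1 ≤ t) :
    (∃ k : Fin t → Fin (t + 1), t ≤ ∑ s, (k s : ℕ) ∧
        ∀ s : Fin t, (k s : ℕ) ≤ (Finset.univ.filter fun b => (s : ℕ) + 1 ≤ c b).card)
      ↔ t ≤ ∑ b : β, c b := by
  classical
  set n : ℕ → ℕ := fun m => (Finset.univ.filter fun b => m ≤ c b).card with hn
  have hkey : ∑ s : Fin t, n (s + 1) = ∑ b : β, min (c b) t := by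
    rw [Fin.sum_univ_eq_sum_range (fun s => n (s + 1))]
    exact sum_card_filter c t
  constructor
  · rintro ⟨k, hsum, hle⟩
    calc t ≤ ∑ s, (k s : ℕ) := hsum
      _ ≤ ∑ s : Fin t, n (s + 1) := Finset.sum_le_sum fun s _ => hle s
      _ = ∑ b : β, min (c b) t := hkey
      _ ≤ ∑ b : β, c b := Finset.sum_le_sum fun b _ => min_le_left _ _
  · intro h
    refine ⟨fun s => ⟨min (n (s + 1)) t, Nat.lt_succ_of_le (min_le_right _ _)⟩, ?_, ?_⟩
    · have h1 : t ≤ ∑ b : β, min (c b) t := sum_min _ _ h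
      have h2 : t ≤ ∑ s : Fin t, min (n (s + 1)) t :=
        sum_min _ _ (hkey ▸ h1)
      simpa using h2
    · intro s; exact min_le_left _ _

end StmtAux

/-- For every primitive positive formula `γ` and positive integer `t` there is a
counting formula `γᵗ` (equality-free and negation-free by construction), using
the same variables and of the same quantifier rank as `γ`, such that for every
finite structure `B` and interpretation `ι`: `B ⊨ γᵗ[ι]` iff the number of
witnessing assignments for `γ` is at least `t`. -/
theorem stmt18 (σ : RelSig) (γ : PP σ) (t : ℕ) (ht : 1 ≤ t) :
    ∃ φ : CF σ, cfQr φ = ppQr γ ∧ cfVars φ ⊆ ppVars γ ∧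
      ∀ (B : RStruct σ) [Fintype B.carrier] (ι : ℕ → B.carrier),
        cfSat B φ ι ↔ t ≤ ppCount B γ ι := by
  induction γ generalizing t with
  | atom s v =>
    rcases Nat.lt_or_ge t 2 with h | h
    · have h1 : t = 1 := by omega
      subst h1
      refine ⟨.atom s v, rfl, Set.Subset.rfl, fun B _ ι => ?_⟩
      by_cases hr : B.rel s (fun i => ι (v i)) <;> simp [cfSat, ppCount, hr]
    · refine ⟨.fls, rfl, by simp [cfVars], fun B _ ι => ?_⟩
      by_cases hr : B.rel s (fun i => ι (v i)) <;>
        simp [cfSat, ppCount, hr] <;> omega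
  | and γ₁ γ₂ ih₁ ih₂ =>
    classical
    choose f₁ hq₁ hv₁ hs₁ using ih₁
    choose f₂ hq₂ hv₂ hs₂ using ih₂
    set g₁ : ℕ → CF σ := fun m => if h : 1 ≤ m then f₁ m h else .fls with hg₁
    set g₂ : ℕ → CF σ := fun m => if h : 1 ≤ m then f₂ m h else .fls with hg₂
    have hgq₁ : ∀ m, 1 ≤ m → cfQr (g₁ m) = ppQr γ₁ := fun m h => by
      simp only [hg₁, dif_pos h]; exact hq₁ m h
    have hgq₂ : ∀ m, 1 ≤ m → cfQr (g₂ m) = ppQr γ₂ := fun m h => by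
      simp only [hg₂, dif_pos h]; exact hq₂ m h
    have hgv₁ : ∀ m, 1 ≤ m → cfVars (g₁ m) ⊆ ppVars γ₁ := fun m h => by
      simp only [hg₁, dif_pos h]; exact hv₁ m h
    have hgv₂ : ∀ m, 1 ≤ m → cfVars (g₂ m) ⊆ ppVars γ₂ := fun m h => by
      simp only [hg₂, dif_pos h]; exact hv₂ m h
    have hgs₁ : ∀ m, 1 ≤ m → ∀ (B : RStruct σ) [Fintype B.carrier] (ι : ℕ → B.carrier),
        cfSat B (g₁ m) ι ↔ m ≤ ppCount B γ₁ ι := fun m h B _ ι => by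
      simp only [hg₁, dif_pos h]; exact hs₁ m h B ι
    have hgs₂ : ∀ m, 1 ≤ m → ∀ (B : RStruct σ) [Fintype B.carrier] (ι : ℕ → B.carrier),
        cfSat B (g₂ m) ι ↔ m ≤ ppCount B γ₂ ι := fun m h B _ ι => by
      simp only [hg₂, dif_pos h]; exact hs₂ m h B ι
    set P : Finset (ℕ × ℕ) :=
      (Finset.Icc 1 t ×ˢ Finset.Icc 1 t).filter (fun p => t ≤ p.1 * p.2) with hP
    have hmemP : ∀ p : ℕ × ℕ, p ∈ P ↔ (1 ≤ p.1 ∧ p.1 ≤ t) ∧ (1 ≤ p.2 ∧ p.2 ≤ t) ∧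
        t ≤ p.1 * p.2 := by
      intro p
      simp [hP, Finset.mem_filter, Finset.mem_product, Finset.mem_Icc, and_assoc]
    have hPne : P.Nonempty := ⟨(t, t), (hmemP (t, t)).2
      ⟨⟨ht, le_refl t⟩, ⟨ht, le_refl t⟩, Nat.le_mul_of_pos_left t ht⟩⟩
    set L : List (CF σ) := P.toList.map (fun p => CF.and (g₁ p.1) (g₂ p.2)) with hL
    have hLne : L ≠ [] := by
      simp only [hL, ne_eq, List.map_eq_nil_iff, Finset.toList_eq_nil]
      exact hPne.ne_empty
    have hmemL : ∀ φ ∈ L, ∃ p : ℕ × ℕ, p ∈ P ∧ φ = CF.and (g₁ p.1) (g₂ p.2) := by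
      intro φ hφ
      obtain ⟨p, hp, rfl⟩ := List.mem_map.1 hφ
      exact ⟨p, Finset.mem_toList.1 hp, rfl⟩
    refine ⟨StmtAux.bigOr L, ?_, ?_, ?_⟩
    · refine StmtAux.bigOr_qr L hLne ?_
      intro φ hφ
      obtain ⟨p, hp, rfl⟩ := hmemL φ hφ
      obtain ⟨⟨h11, _⟩, ⟨h21, _⟩, _⟩ := (hmemP p).1 hp
      show max (cfQr (g₁ p.1)) (cfQr (g₂ p.2)) = max (ppQr γ₁) (ppQr γ₂)
      rw [hgq₁ _ h11, hgq₂ _ h21]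
    · refine StmtAux.bigOr_vars L ?_
      intro φ hφ
      obtain ⟨p, hp, rfl⟩ := hmemL φ hφ
      obtain ⟨⟨h11, _⟩, ⟨h21, _⟩, _⟩ := (hmemP p).1 hp
      show cfVars (g₁ p.1) ∪ cfVars (g₂ p.2) ⊆ ppVars γ₁ ∪ ppVars γ₂
      exact Set.union_subset ((hgv₁ _ h11).trans Set.subset_union_left)
        ((hgv₂ _ h21).trans Set.subset_union_right)
    · intro B _ ι
      rw [StmtAux.bigOr_sat]
      show _ ↔ t ≤ ppCount B γ₁ ι * ppCount B γ₂ ι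
      constructor
      · rintro ⟨φ, hφ, hsat⟩
        obtain ⟨p, hp, rfl⟩ := hmemL φ hφ
        obtain ⟨⟨h11, _⟩, ⟨h21, _⟩, hmul⟩ := (hmemP p).1 hp
        obtain ⟨hs1, hs2⟩ := hsat
        have c1 := (hgs₁ _ h11 B ι).1 hs1
        have c2 := (hgs₂ _ h21 B ι).1 hs2
        calc t ≤ p.1 * p.2 := hmul
          _ ≤ _ := Nat.mul_le_mul c1 c2
      · intro h
        set c₁ := ppCount B γ₁ ι
        set c₂ := ppCount B γ₂ ι
        have hc1 : 1 ≤ c₁ := Nat.one_le_iff_ne_zero.2 (by rintro hc; rw [hc] at h; simp at h; omega)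
        have hc2 : 1 ≤ c₂ := Nat.one_le_iff_ne_zero.2 (by rintro hc; rw [hc] at h; simp at h; omega)
        refine ⟨CF.and (g₁ (min c₁ t)) (g₂ (min c₂ t)), ?_, ?_, ?_⟩
        · refine List.mem_map.2 ⟨(min c₁ t, min c₂ t), Finset.mem_toList.2 ?_, rfl⟩
          refine (hmemP _).2 ⟨⟨le_min hc1 ht, min_le_right _ _⟩,
            ⟨le_min hc2 ht, min_le_right _ _⟩, StmtAux.min_mul_min ht h⟩
        · exact (hgs₁ _ (le_min hc1 ht) B ι).2 (min_le_left _ _)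
        · exact (hgs₂ _ (le_min hc2 ht) B ι).2 (min_le_left _ _)
  | ex x γ₁ ih =>
    classical
    choose f hqf hvf hsf using ih
    set g : ℕ → CF σ := fun m => if h : 1 ≤ m then f m h else .fls with hg
    have hgq : ∀ m, 1 ≤ m → cfQr (g m) = ppQr γ₁ := fun m h => by
      simp only [hg, dif_pos h]; exact hqf m h
    have hgv : ∀ m, 1 ≤ m → cfVars (g m) ⊆ ppVars γ₁ := fun m h => by
      simp only [hg, dif_pos h]; exact hvf m h
    have hgs : ∀ m, 1 ≤ m → ∀ (B : RStruct σ) [Fintype B.carrier] (ι : ℕ → B.carrier),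
        cfSat B (g m) ι ↔ m ≤ ppCount B γ₁ ι := fun m h B _ ι => by
      simp only [hg, dif_pos h]; exact hsf m h B ι
    set K : Finset (Fin t → Fin (t + 1)) :=
      Finset.univ.filter (fun k => t ≤ ∑ s, ((k s : ℕ))) with hK
    have hKne : K.Nonempty := by
      refine ⟨fun _ => Fin.last t, ?_⟩
      simp only [hK, Finset.mem_filter, Finset.mem_univ, true_and, Fin.val_last]
      simp only [Finset.sum_const, Finset.card_univ, Fintype.card_fin, smul_eq_mul]
      exact Nat.le_mul_of_pos_left t ht
    set F : (Fin t → Fin (t + 1)) → CF σ := fun k =>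
      StmtAux.bigAnd (List.ofFn (fun s : Fin t => CF.cnt (k s) x (g ((s : ℕ) + 1)))) with hF
    set L : List (CF σ) := K.toList.map F with hL
    have hLne : L ≠ [] := by
      simp only [hL, ne_eq, List.map_eq_nil_iff, Finset.toList_eq_nil]
      exact hKne.ne_empty
    have hofn_ne : ∀ k : Fin t → Fin (t + 1),
        List.ofFn (fun s : Fin t => CF.cnt (k s) x (g ((s : ℕ) + 1))) ≠ [] := by
      intro k hk
      have := congrArg List.length hk
      simp at this
      omega
    have hmemL : ∀ φ ∈ L, ∃ k, k ∈ K ∧ φ = F k := by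
      intro φ hφ
      obtain ⟨k, hk, rfl⟩ := List.mem_map.1 hφ
      exact ⟨k, Finset.mem_toList.1 hk, rfl⟩
    refine ⟨StmtAux.bigOr L, ?_, ?_, ?_⟩
    · refine StmtAux.bigOr_qr L hLne ?_
      intro φ hφ
      obtain ⟨k, _, rfl⟩ := hmemL φ hφ
      refine StmtAux.bigAnd_qr _ (hofn_ne k) ?_
      intro χ hχ
      obtain ⟨s, rfl⟩ := List.mem_ofFn.1 hχ
      show cfQr (g ((s : ℕ) + 1)) + 1 = ppQr γ₁ + 1
      rw [hgq _ (by omega)]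
    · refine StmtAux.bigOr_vars L ?_
      intro φ hφ
      obtain ⟨k, _, rfl⟩ := hmemL φ hφ
      refine StmtAux.bigAnd_vars _ ?_
      intro χ hχ
      obtain ⟨s, rfl⟩ := List.mem_ofFn.1 hχ
      show insert x (cfVars (g ((s : ℕ) + 1))) ⊆ insert x (ppVars γ₁)
      exact Set.insert_subset_insert (hgv _ (by omega))
    · intro B _ ι
      set c : B.carrier → ℕ := fun b => ppCount B γ₁ (Function.update ι x b) with hc
      have hcard : ∀ s : Fin t,
          Nat.card {b : B.carrier // cfSat B (g ((s : ℕ) + 1)) (Function.update ι x b)}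
            = (Finset.univ.filter fun b => (s : ℕ) + 1 ≤ c b).card := by
        intro s
        rw [Nat.card_congr (Equiv.subtypeEquivRight
          (fun b => hgs ((s : ℕ) + 1) (by omega) B (Function.update ι x b)))]
        rw [Nat.card_eq_fintype_card, Fintype.card_subtype]
      rw [StmtAux.bigOr_sat]
      show _ ↔ t ≤ ∑ b : B.carrier, c b
      rw [← StmtAux.exists_tuple_iff c ht]
      constructor
      · rintro ⟨φ, hφ, hsat⟩
        obtain ⟨k, hk, rfl⟩ := hmemL φ hφ
        refine ⟨k, ?_, ?_⟩
        · simpa [hK, Finset.mem_filter] using hk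
        · intro s
          rw [← hcard s]
          have := (StmtAux.bigAnd_sat B ι _ (hofn_ne k)).1 hsat
          exact this _ (List.mem_ofFn.2 ⟨s, rfl⟩)
      · rintro ⟨k, hksum, hkle⟩
        refine ⟨F k, List.mem_map.2 ⟨k, Finset.mem_toList.2 ?_, rfl⟩, ?_⟩
        · simp only [hK, Finset.mem_filter, Finset.mem_univ, true_and]
          exact hksum
        · refine (StmtAux.bigAnd_sat B ι _ (hofn_ne k)).2 ?_
          intro χ hχ
          obtain ⟨s, rfl⟩ := List.mem_ofFn.1 hχ
          show (k s : ℕ) ≤ Nat.card _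
          rw [hcard s]
          exact hkle s
end
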